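/- Let G be a graph, I = {v_1, …, v_k} an independent set in G of size k, D = V(G) × [k] × [3], and M = M_hp the block matrix built from G as in the construction (blocks M_start, M_end, M_bij, 0, Id as specified). Then the composed relation R = H^M_{D[v_1,1],D[v_1,1]} ∘ H^M_{D[v_1,1],D[v_2,2]} ∘ ⋯ ∘ H^M_{D[v_{k-1},k-1],D[v_k,k]} ∘ H^M_{D[v_k,k],D[v_k,k]} equals {((v_1,1,c),(v_k,k,c')) : c,c' ∈ [3]} \ {((v_1,1,3),(v_k,k,1))}, which is not rectangular. -/

import Mathlib

inductive Entry | zero | one | star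
deriving DecidableEq

def Rectangular {α β : Type*} (R : Set (α × β)) : Prop :=
  ∀ i j i' j', (i, i') ∈ R → (i, j') ∈ R → (j, i') ∈ R → (j, j') ∈ R

def comp {α β γ : Type*} (R : Set (α × β)) (S : Set (β × γ)) : Set (α × γ) :=
  {p | ∃ b, (p.1, b) ∈ R ∧ (b, p.2) ∈ S}

def compList {α : Type*} : List (Set (α × α)) → Set (α × α)
  | [] => {p | p.1 = p.2}
  | R :: rest => comp R (compList rest)

def H {D : Type*} (M : D → D → Entry) (X Y : Set D) : Set (D × D) :=
  {p | p.1 ∈ X ∧ p.2 ∈ Y ∧ M p.1 p.2 = Entry.star}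

def Mstart : Fin 3 → Fin 3 → Entry :=
  ![![.star, .star, .zero], ![.star, .star, .zero], ![.zero, .zero, .star]]

def Mend : Fin 3 → Fin 3 → Entry :=
  ![![.star, .zero, .zero], ![.zero, .star, .star], ![.zero, .star, .star]]

def Mbij : Fin 3 → Fin 3 → Entry :=
  ![![.star, .zero, .zero], ![.zero, .star, .zero], ![.zero, .zero, .star]]

def Id3 : Fin 3 → Fin 3 → Entry :=
  ![![.one, .zero, .zero], ![.zero, .one, .zero], ![.zero, .zero, .one]]

/-- The block matrix `M` built from `G` in the NP-hardness construction. -/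
def Mmat {n k : ℕ} (G : SimpleGraph (Fin n)) [DecidableRel G.Adj] :
    (Fin n × Fin k × Fin 3) → (Fin n × Fin k × Fin 3) → Entry :=
  fun p q =>
    if p.1 = q.1 ∧ p.2.1 = q.2.1 then
      (if p.2.1.val = 0 then Mstart p.2.2 q.2.2
       else if p.2.1.val = k - 1 then Mend p.2.2 q.2.2
       else Mbij p.2.2 q.2.2)
    else if p.1 ≠ q.1 ∧ ¬ G.Adj p.1 q.1 ∧
            (q.2.1.val = p.2.1.val + 1 ∨ p.2.1.val = q.2.1.val + 1) then
      Mbij p.2.2 q.2.2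
    else if p.1 ≠ q.1 ∧ ¬ G.Adj p.1 q.1 ∧
            (p.2.1.val + 1 < q.2.1.val ∨ q.2.1.val + 1 < p.2.1.val) then
      Entry.zero
    else Id3 p.2.2 q.2.2

/-- `D[v,j]`: the three domain elements `(v,j,c)`, `c ∈ [3]`. -/
def Dset {n k : ℕ} (v : Fin n) (j : Fin k) : Set (Fin n × Fin k × Fin 3) :=
  {p | p.1 = v ∧ p.2.1 = j}

/-!
Each block `H^M_{D[v,j],D[v',j']}` of the chain is the image of a relation on `Fin 3` under the
injections `c ↦ (v, j, c)`, and composing such images through an injective middle map composes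
the underlying relations. Since `I` is independent, every middle block is the bijection `Mbij`, so
the chain collapses to `Mstart ∘ Mend`, which relates every pair of colours except `(2, 0)`
(colours are `0, 1, 2` here). A full `3 × 3` relation with a single hole is not rectangular.
-/

section Relations

variable {α β γ δ ε : Type*}

lemma comp_assoc (R : Set (α × β)) (S : Set (β × γ)) (T : Set (γ × δ)) :
    comp (comp R S) T = comp R (comp S T) := by
  ext p
  constructor
  · rintro ⟨c, ⟨b, hb, hc⟩, ht⟩
    exact ⟨b, hb, c, hc, ht⟩
  · rintro ⟨b, hb, c, hc, ht⟩
    exact ⟨c, ⟨b, hb, hc⟩, ht⟩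

lemma comp_diagonal (R : Set (α × β)) : comp R (Set.diagonal β) = R := by
  ext ⟨a, b⟩
  constructor
  · rintro ⟨x, hb, hx⟩
    rwa [show x = b from hx] at hb
  · exact fun h => ⟨b, h, rfl⟩

lemma diagonal_comp (R : Set (α × β)) : comp (Set.diagonal α) R = R := by
  ext ⟨a, b⟩
  constructor
  · rintro ⟨x, hx, hb⟩
    rwa [← show a = x from hx] at hb
  · exact fun h => ⟨a, rfl, h⟩

lemma compList_append (L L' : List (Set (α × α))) :
    compList (L ++ L') = comp (compList L) (compList L') := by
  induction L with
  | nil => exact (diagonal_comp _).symm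
  | cons R L ih => rw [List.cons_append, compList, compList, ih, comp_assoc]

lemma compList_singleton (R : Set (α × α)) : compList [R] = R :=
  comp_diagonal R

lemma comp_setOf_map_of_injective {r : γ → δ → Prop} {s : δ → ε → Prop} {f : γ → α}
    {g : δ → β} {h : ε → α} (hg : Function.Injective g) :
    comp {p : α × β | Relation.Map r f g p.1 p.2} {p | Relation.Map s g h p.1 p.2} =
      {p | Relation.Map (Relation.Comp r s) f h p.1 p.2} := by
  ext ⟨a, c⟩
  constructor
  · rintro ⟨_, ⟨x, y, hxy, rfl, rfl⟩, y', z, hyz, hy, rfl⟩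
    exact ⟨x, z, ⟨y, hxy, hg hy ▸ hyz⟩, rfl, rfl⟩
  · rintro ⟨x, z, ⟨y, hxy, hyz⟩, rfl, rfl⟩
    exact ⟨g y, ⟨x, y, hxy, rfl, rfl⟩, y, z, hyz, rfl, rfl⟩

lemma comp_compList_bijection_chain (r : δ → γ → Prop) (f : δ → α) (X : ℕ → γ → α)
    (hX : ∀ i, Function.Injective (X i)) (m : ℕ) :
    comp {p | Relation.Map r f (X 0) p.1 p.2}
        (compList ((List.range m).map fun i => {p | Relation.Map Eq (X i) (X (i + 1)) p.1 p.2})) =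
      {p | Relation.Map r f (X m) p.1 p.2} := by
  induction m with
  | zero => exact comp_diagonal _
  | succ m ih =>
    rw [List.range_succ, List.map_append, compList_append, ← comp_assoc, ih, List.map_singleton,
      compList_singleton, comp_setOf_map_of_injective (hX m), Relation.comp_eq]

lemma setOf_map_ne_eq_diff {f : γ → α} {g : δ → β} (hf : Function.Injective f)
    (hg : Function.Injective g) (c₀ : γ) (d₀ : δ) :
    {p | Relation.Map (fun c d => (c, d) ≠ (c₀, d₀)) f g p.1 p.2} =
      {p | ∃ c d, p = (f c, g d)} \ {(f c₀, g d₀)} := by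
  ext ⟨a, b⟩
  constructor
  · rintro ⟨c, d, hcd, rfl, rfl⟩
    refine ⟨⟨c, d, rfl⟩, fun h => hcd ?_⟩
    simp only [Set.mem_singleton_iff, Prod.mk.injEq, hf.eq_iff, hg.eq_iff] at h
    rw [h.1, h.2]
  · rintro ⟨⟨c, d, hp⟩, hne⟩
    simp only [Prod.mk.injEq] at hp
    obtain ⟨rfl, rfl⟩ := hp
    exact ⟨c, d, fun h => hne (by cases h; rfl), rfl, rfl⟩

lemma Rectangular.of_map {r : γ → δ → Prop} {f : γ → α} {g : δ → β}
    (hf : Function.Injective f) (hg : Function.Injective g)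
    (h : Rectangular {p | Relation.Map r f g p.1 p.2}) :
    Rectangular {p : γ × δ | r p.1 p.2} := by
  intro c c' d d' hcd hcd' hc'd
  exact (Relation.map_apply_apply hf hg r c' d').1 <|
    h (f c) (f c') (g d) (g d') ⟨c, d, hcd, rfl, rfl⟩ ⟨c, d', hcd', rfl, rfl⟩
      ⟨c', d, hc'd, rfl, rfl⟩

end Relations

section Construction

variable {n k : ℕ}

lemma H_Dset_Dset (M : Fin n × Fin k × Fin 3 → Fin n × Fin k × Fin 3 → Entry)
    (w w' : Fin n) (j j' : Fin k) :
    H M (Dset w j) (Dset w' j') =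
      {p | Relation.Map (fun c c' => M (w, j, c) (w', j', c') = .star)
        (fun c => (w, j, c)) (fun c => (w', j', c)) p.1 p.2} := by
  ext ⟨⟨a, b, c⟩, ⟨a', b', c'⟩⟩
  constructor
  · rintro ⟨⟨rfl, rfl⟩, ⟨rfl, rfl⟩, hM⟩
    exact ⟨c, c', hM, rfl, rfl⟩
  · rintro ⟨c, c', hM, hp, hp'⟩
    simp only [Prod.mk.injEq] at hp hp'
    obtain ⟨rfl, rfl, rfl⟩ := hp
    obtain ⟨rfl, rfl, rfl⟩ := hp'
    exact ⟨⟨rfl, rfl⟩, ⟨rfl, rfl⟩, hM⟩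

variable (G : SimpleGraph (Fin n)) [DecidableRel G.Adj]

lemma Mmat_of_val_eq_zero (w : Fin n) {j : Fin k} (hj : j.val = 0) (c c' : Fin 3) :
    Mmat G (w, j, c) (w, j, c') = Mstart c c' := by
  simp [Mmat, hj]

lemma Mmat_of_val_eq_last (w : Fin n) {j : Fin k} (hj : j.val = k - 1) (hj₀ : j.val ≠ 0)
    (c c' : Fin 3) :
    Mmat G (w, j, c) (w, j, c') = Mend c c' := by
  simp only [Mmat, and_self, if_true]
  rw [if_neg hj₀, if_pos hj]

lemma Mmat_of_val_eq_succ {w w' : Fin n} (hw : w ≠ w') (hG : ¬ G.Adj w w') {j j' : Fin k}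
    (hj : j'.val = j.val + 1) (c c' : Fin 3) :
    Mmat G (w, j, c) (w', j', c') = Mbij c c' := by
  simp only [Mmat]
  rw [if_neg (by simp [hw]), if_pos ⟨hw, hG, Or.inl hj⟩]

lemma H_Mmat_of_val_eq_zero (w : Fin n) {j : Fin k} (hj : j.val = 0) :
    H (Mmat G) (Dset w j) (Dset w j) =
      {p | Relation.Map (fun c c' => Mstart c c' = .star)
        (fun c => (w, j, c)) (fun c => (w, j, c)) p.1 p.2} := by
  simp only [H_Dset_Dset, Mmat_of_val_eq_zero G w hj]

lemma H_Mmat_of_val_eq_last (w : Fin n) {j : Fin k} (hj : j.val = k - 1) (hj₀ : j.val ≠ 0) :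
    H (Mmat G) (Dset w j) (Dset w j) =
      {p | Relation.Map (fun c c' => Mend c c' = .star)
        (fun c => (w, j, c)) (fun c => (w, j, c)) p.1 p.2} := by
  simp only [H_Dset_Dset, Mmat_of_val_eq_last G w hj hj₀]

lemma Mbij_eq_star_iff (c c' : Fin 3) : Mbij c c' = .star ↔ c = c' := by
  revert c c'
  decide

lemma H_Mmat_of_val_eq_succ {w w' : Fin n} (hw : w ≠ w') (hG : ¬ G.Adj w w') {j j' : Fin k}
    (hj : j'.val = j.val + 1) :
    H (Mmat G) (Dset w j) (Dset w' j') =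
      {p | Relation.Map Eq (fun c => (w, j, c)) (fun c => (w', j', c)) p.1 p.2} := by
  simp only [H_Dset_Dset, Mmat_of_val_eq_succ G hw hG hj, Mbij_eq_star_iff]

lemma Mstart_comp_Mend :
    Relation.Comp (fun c c' => Mstart c c' = .star) (fun c c' => Mend c c' = .star) =
      fun c c' => (c, c') ≠ ((2 : Fin 3), (0 : Fin 3)) := by
  funext c c'
  apply propext
  revert c c'
  unfold Relation.Comp
  decide

lemma not_rectangular_setOf_ne_two_zero : ¬ Rectangular {p : Fin 3 × Fin 3 | p ≠ (2, 0)} := by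
  unfold Rectangular
  decide

end Construction

theorem independent_set_gives_nonrectangular_chain {n k : ℕ} (hk : 2 ≤ k)
    (G : SimpleGraph (Fin n)) [DecidableRel G.Adj]
    (v : Fin k → Fin n) (hinj : Function.Injective v)
    (hind : ∀ i i' : Fin k, ¬ G.Adj (v i) (v i')) :
    let M := Mmat (k := k) G
    let j0 : Fin k := ⟨0, by omega⟩
    let jl : Fin k := ⟨k - 1, by omega⟩
    let R := compList (
      [H M (Dset (v j0) j0) (Dset (v j0) j0)] ++
      (List.finRange (k - 1)).map (fun i =>
        H M (Dset (v ⟨i.val, by have := i.isLt; omega⟩) ⟨i.val, by have := i.isLt; omega⟩)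
            (Dset (v ⟨i.val + 1, by have := i.isLt; omega⟩)
                  ⟨i.val + 1, by have := i.isLt; omega⟩)) ++
      [H M (Dset (v jl) jl) (Dset (v jl) jl)])
    R = {p : (Fin n × Fin k × Fin 3) × (Fin n × Fin k × Fin 3) |
            ∃ c c' : Fin 3, p = ((v j0, j0, c), (v jl, jl, c'))} \
          {((v j0, j0, (2 : Fin 3)), (v jl, jl, (0 : Fin 3)))} ∧
      ¬ Rectangular R := by
  intro M j0 jl R
  -- `X i` parametrises `D[v_i, i]`; beyond `k` it only has to stay injective.
  let X : ℕ → Fin 3 → Fin n × Fin k × Fin 3 :=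
    fun i c => if h : i < k then (v ⟨i, h⟩, ⟨i, h⟩, c) else (v j0, j0, c)
  have hX_of_lt (i : ℕ) (h : i < k) : X i = fun c => (v ⟨i, h⟩, ⟨i, h⟩, c) :=
    funext fun _ => dif_pos h
  have hX_inj (i : ℕ) : Function.Injective (X i) := fun c c' h => by
    by_cases hi : i < k <;> simpa [X, hi] using h
  have hmid : (List.finRange (k - 1)).map (fun i =>
        H M (Dset (v ⟨i.val, by have := i.isLt; omega⟩) ⟨i.val, by have := i.isLt; omega⟩)
          (Dset (v ⟨i.val + 1, by have := i.isLt; omega⟩)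
            ⟨i.val + 1, by have := i.isLt; omega⟩)) =
      (List.range (k - 1)).map fun i => {p | Relation.Map Eq (X i) (X (i + 1)) p.1 p.2} := by
    rw [← List.map_coe_finRange_eq_range, List.map_map]
    refine List.map_congr_left fun i _ => ?_
    rw [Function.comp_apply, hX_of_lt i (by omega), hX_of_lt (i + 1) (by omega)]
    exact H_Mmat_of_val_eq_succ G (hinj.ne (by simp [Fin.ext_iff])) (hind _ _) rfl
  have hR : R = {p | Relation.Map (fun c c' => (c, c') ≠ (2, 0)) (X 0) (X (k - 1)) p.1 p.2} := by
    change compList _ = _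
    rw [compList_append, List.singleton_append, compList, hmid, compList_singleton,
      H_Mmat_of_val_eq_zero G _ (j := j0) rfl, H_Mmat_of_val_eq_last G _ (j := jl) rfl
      (by change k - 1 ≠ 0; omega), ← hX_of_lt 0, ← hX_of_lt (k - 1),
      comp_compList_bijection_chain _ _ X hX_inj, comp_setOf_map_of_injective (hX_inj _),
      Mstart_comp_Mend]
  refine ⟨?_, fun hrect => not_rectangular_setOf_ne_two_zero ?_⟩
  · rw [hR, setOf_map_ne_eq_diff (hX_inj 0) (hX_inj (k - 1)), hX_of_lt 0 (by omega),
      hX_of_lt (k - 1) (by omega)]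
  · exact Rectangular.of_map (hX_inj 0) (hX_inj (k - 1)) (hR ▸ hrect)
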